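/- arXiv:1706.07255 — 4 statements merged into one kernel-verified Lean document; each statement's English description precedes it below -/
import Mathlib

section
/- For every integer n ≥ 0 and every configuration X_I on the figure-8 graph F_n (which has N = 7n + 6 vertices), there exists a configuration X_G such that every solution from X_I to X_G has makespan T satisfying 7^T ≥ N!. In particular, there is an infinite family of instances on figure-8 graphs whose minimum makespan is Ω(N log N), i.e., superlinear in the number of vertices. -/
open SimpleGraph

def IsMove {V : Type*} (G : SimpleGraph V) (X Y : Equiv.Perm V) : Prop :=
  (∀ r, Y r = X r ∨ G.Adj (X r) (Y r)) ∧
  (∀ r s, r ≠ s → ¬(Y r = X s ∧ Y s = X r ∧ X r ≠ X s))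

def IsSolution {V : Type*} (G : SimpleGraph V) (XI XG : Equiv.Perm V) (T : ℕ)
    (Xs : ℕ → Equiv.Perm V) : Prop :=
  Xs 0 = XI ∧ Xs T = XG ∧ ∀ t < T, IsMove G (Xs t) (Xs (t + 1))

/-- Vertex set of the figure-8 graph `F n`: two junction vertices, plus the internal
vertices of three paths with `n`, `3n+2` and `3n+2` internal vertices respectively.
In total `7n + 6` vertices. -/
abbrev F8V (n : ℕ) := Fin 2 ⊕ (Fin n ⊕ (Fin (3 * n + 2) ⊕ Fin (3 * n + 2)))

/-- One-directional edge relation for the figure-8 graph: junction `0` is attached to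
the first internal vertex of each path, junction `1` to the last, consecutive internal
vertices of each path are adjacent, and when `n = 0` the first path degenerates to an
edge between the two junctions. -/
def F8Rel (n : ℕ) : F8V n → F8V n → Prop
  | .inl a, .inl b => n = 0 ∧ a.val = 0 ∧ b.val = 1
  | .inl a, .inr (.inl i) => (a.val = 0 ∧ i.val = 0) ∨ (a.val = 1 ∧ i.val + 1 = n)
  | .inl a, .inr (.inr (.inl i)) =>
      (a.val = 0 ∧ i.val = 0) ∨ (a.val = 1 ∧ i.val + 1 = 3 * n + 2)
  | .inl a, .inr (.inr (.inr i)) =>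
      (a.val = 0 ∧ i.val = 0) ∨ (a.val = 1 ∧ i.val + 1 = 3 * n + 2)
  | .inr (.inl i), .inr (.inl k) => i.val + 1 = k.val
  | .inr (.inr (.inl i)), .inr (.inr (.inl k)) => i.val + 1 = k.val
  | .inr (.inr (.inr i)), .inr (.inr (.inr k)) => i.val + 1 = k.val
  | _, _ => False

/-- The figure-8 graph `F n` on `7n + 6` vertices: two junction vertices joined by
three internally vertex-disjoint paths having `n`, `3n+2` and `3n+2` internal
vertices respectively. -/
def figureEight (n : ℕ) : SimpleGraph (F8V n) := SimpleGraph.fromRel (F8Rel n)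

/-!
In one synchronous step the robots on `F n` can realise only seven vertex permutations: the
identity, and the rotations in either direction around one of the three cycles formed by two
of the three strands. Indeed no two robots may swap along an edge, so a robot entering a strand,
whose inner vertices have degree two, pushes the whole strand along; hence a move is determined
by where it sends the robots on the two junctions. Therefore at most `7 ^ T` configurations are
reachable in `T` steps, and some configuration is not reachable while `7 ^ T < N!`.
-/

open Equiv

section Moves

variable {V : Type*} {G : SimpleGraph V}

/-- The vertex permutation `Y * X⁻¹` performed by a synchronous move from `X` to `Y`. -/
def IsMovePerm (G : SimpleGraph V) (π : Perm V) : Prop :=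
  (∀ v, π v = v ∨ G.Adj v (π v)) ∧ ∀ v w, π v = w → π w = v → v = w

lemma IsMove.isMovePerm_mul_inv {X Y : Perm V} (h : IsMove G X Y) : IsMovePerm G (Y * X⁻¹) := by
  refine ⟨fun v => ?_, fun v w hvw hwv => ?_⟩
  · simpa using h.1 (X⁻¹ v)
  · by_contra hne
    refine h.2 (X⁻¹ v) (X⁻¹ w) (by simpa using hne) ⟨?_, ?_, ?_⟩
    · simpa using hvw
    · simpa using hwv
    · simpa using hne

lemma isMove_refl (X : Perm V) : IsMove G X X :=
  ⟨fun _ => Or.inl rfl, fun _ _ hrs h => hrs (X.injective h.1)⟩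

lemma IsMovePerm.inv {π : Perm V} (hπ : IsMovePerm G π) : IsMovePerm G π⁻¹ := by
  refine ⟨fun v => ?_, fun v w hvw hwv => ?_⟩
  · rcases hπ.1 (π⁻¹ v) with h | h
    · exact Or.inl (by simpa using h.symm)
    · exact Or.inr (by simpa using h.symm)
  · rw [Perm.inv_eq_iff_eq] at hvw hwv
    exact (hπ.2 w v hvw.symm hwv.symm).symm

def reachableIn (G : SimpleGraph V) (XI : Perm V) (T : ℕ) : Set (Perm V) :=
  {XG | ∃ Xs, IsSolution G XI XG T Xs}

variable {XI : Perm V}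

lemma reachableIn_mono : Monotone (reachableIn G XI) := by
  refine monotone_nat_of_le_succ fun T XG ⟨Xs, h0, hT, hmove⟩ => ?_
  refine ⟨fun t => Xs (min t T), by simpa using h0, by simpa using hT, fun t ht => ?_⟩
  change IsMove G (Xs (min t T)) (Xs (min (t + 1) T))
  rcases Nat.lt_or_ge t T with htT | htT
  · rw [min_eq_left htT.le, min_eq_left htT]
    exact hmove t htT
  · rw [min_eq_right htT, min_eq_right (by omega)]
    exact isMove_refl _

lemma reachableIn_zero_subset : reachableIn G XI 0 ⊆ {XI} :=
  fun _ ⟨_, h0, hT, _⟩ => hT.symm.trans h0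

lemma reachableIn_succ_subset (T : ℕ) :
    reachableIn G XI (T + 1) ⊆
      (fun p : Perm V × Perm V => p.1 * p.2) ''
        ({π | IsMovePerm G π} ×ˢ reachableIn G XI T) := by
  rintro XG ⟨Xs, h0, hT, hmove⟩
  refine ⟨(XG * (Xs T)⁻¹, Xs T), ⟨?_, Xs, h0, rfl, fun t _ => hmove t (by omega)⟩,
    by simp⟩
  simpa [hT] using (hmove T (by omega)).isMovePerm_mul_inv

lemma ncard_reachableIn_le [Finite V] {k : ℕ} (hk : {π | IsMovePerm G π}.ncard ≤ k)
    (T : ℕ) : (reachableIn G XI T).ncard ≤ k ^ T := by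
  induction T with
  | zero => simpa using Set.ncard_le_ncard (reachableIn_zero_subset (G := G) (XI := XI))
  | succ T ih =>
    calc (reachableIn G XI (T + 1)).ncard
        ≤ ({π | IsMovePerm G π} ×ˢ reachableIn G XI T).ncard :=
          (Set.ncard_le_ncard (reachableIn_succ_subset T)).trans Set.ncard_image_le
      _ ≤ k * k ^ T := by rw [Set.ncard_prod]; exact Nat.mul_le_mul hk ih
      _ = k ^ (T + 1) := (pow_succ' k T).symm

theorem exists_factorial_le_pow_makespan [Finite V] {k : ℕ} (hk : 1 < k)
    (hmoves : {π | IsMovePerm G π}.ncard ≤ k) (XI : Perm V) :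
    ∃ XG, ∀ T Xs, IsSolution G XI XG T Xs → (Nat.card V).factorial ≤ k ^ T := by
  have hex : ∃ t, (Nat.card V).factorial ≤ k ^ t := ⟨_, (Nat.lt_pow_self hk).le⟩
  rcases hfind : Nat.find hex with _ | s
  · refine ⟨XI, fun T _ _ => ?_⟩
    calc (Nat.card V).factorial ≤ k ^ 0 := hfind ▸ Nat.find_spec hex
      _ ≤ k ^ T := Nat.pow_le_pow_right (by omega) (Nat.zero_le T)
  · have hs : k ^ s < (Nat.card V).factorial := not_le.mp (Nat.find_min hex (by omega))
    obtain ⟨XG, hXG⟩ : ∃ XG, XG ∉ reachableIn G XI s := by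
      refine (Set.ne_univ_iff_exists_notMem _).mp fun huniv => ?_
      have := ncard_reachableIn_le (XI := XI) hmoves s
      rw [huniv, Set.ncard_univ, Nat.card_perm] at this
      omega
    refine ⟨XG, fun T Xs hsol => ?_⟩
    have hT : s < T := by
      by_contra! hT
      exact hXG (reachableIn_mono hT ⟨Xs, hsol⟩)
    calc (Nat.card V).factorial ≤ k ^ (s + 1) := hfind ▸ Nat.find_spec hex
      _ ≤ k ^ T := Nat.pow_le_pow_right (by omega) hT

end Moves

section Threads

variable {V : Type*} {G : SimpleGraph V}

/-- `x 0, x 1, …, x (m + 1)` is a walk in `G` whose inner vertices `x 1, …, x m` have no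
neighbours besides their two neighbours on the walk. -/
def IsThread (G : SimpleGraph V) (x : ℕ → V) (m : ℕ) : Prop :=
  (∀ i ≤ m, G.Adj (x i) (x (i + 1))) ∧
    ∀ i < m, ∀ v, G.Adj (x (i + 1)) v → v = x i ∨ v = x (i + 2)

namespace IsThread

variable {x : ℕ → V} {m : ℕ} {π σ : Perm V}

lemma step_up (hx : IsThread G x m) (hπ : IsMovePerm G π) {j : ℕ} (hj : j < m)
    (h : π (x j) = x (j + 1)) : π (x (j + 1)) = x (j + 2) := by
  have hne := (hx.1 j hj.le).ne
  rcases hπ.1 (x (j + 1)) with hfix | hadj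
  · exact absurd (π.injective (h.trans hfix.symm)) hne
  · rcases hx.2 j hj _ hadj with hback | hfwd
    · exact absurd (hπ.2 _ _ h hback) hne
    · exact hfwd

lemma step_down (hx : IsThread G x m) (hπ : IsMovePerm G π) {j : ℕ} (hj : j < m)
    (h : π (x (j + 1)) = x (j + 2)) : π (x j) = x (j + 1) := by
  have hne := (hx.1 (j + 1) hj).ne
  rcases hπ.inv.1 (x (j + 1)) with hfix | hadj
  · rw [Perm.inv_eq_iff_eq] at hfix
    exact absurd (hfix.trans h) hne
  · rcases hx.2 j hj _ hadj with hback | hfwd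
    · rw [Perm.inv_eq_iff_eq] at hback
      exact hback.symm
    · rw [Perm.inv_eq_iff_eq] at hfwd
      exact absurd (hπ.2 _ _ h hfwd.symm) hne

lemma forward (hx : IsThread G x m) (hπ : IsMovePerm G π) {i : ℕ} (hi : i ≤ m)
    (h : π (x i) = x (i + 1)) {j : ℕ} (hj : j ≤ m) : π (x j) = x (j + 1) := by
  rcases le_total i j with hij | hji
  · induction j, hij using Nat.le_induction with
    | base => exact h
    | succ j _ ih => exact hx.step_up hπ hj (ih (by omega))
  · induction hji using Nat.decreasingInduction with
    | self => exact h
    | of_succ j hj' ih => exact hx.step_down hπ (by omega) (ih (by omega))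

lemma backward (hx : IsThread G x m) (hπ : IsMovePerm G π) {i : ℕ} (hi : i ≤ m)
    (h : π (x (i + 1)) = x i) {j : ℕ} (hj : j ≤ m) : π (x (j + 1)) = x j := by
  have := hx.forward hπ.inv hi (by rw [Perm.inv_eq_iff_eq, h]) hj
  rwa [Perm.inv_eq_iff_eq, eq_comm] at this

lemma fixed (hx : IsThread G x m) (hπ : IsMovePerm G π) (h0 : π (x 0) ≠ x 1)
    (h1 : π (x (m + 1)) ≠ x m) {j : ℕ} (hj : j < m) : π (x (j + 1)) = x (j + 1) := by
  rcases hπ.1 (x (j + 1)) with hfix | hadj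
  · exact hfix
  · rcases hx.2 j hj _ hadj with hback | hfwd
    · exact absurd (hx.backward hπ hj.le hback le_rfl) h1
    · exact absurd (hx.forward hπ hj hfwd (Nat.zero_le m)) h0

lemma eq_of_ends (hx : IsThread G x m) (hπ : IsMovePerm G π) (hσ : IsMovePerm G σ)
    (h0 : π (x 0) = σ (x 0)) (h1 : π (x (m + 1)) = σ (x (m + 1))) {j : ℕ} (hj : j < m) :
    π (x (j + 1)) = σ (x (j + 1)) := by
  by_cases hf : π (x 0) = x 1
  · rw [hx.forward hπ (Nat.zero_le m) hf hj, hx.forward hσ (Nat.zero_le m) (h0 ▸ hf) hj]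
  by_cases hb : π (x (m + 1)) = x m
  · rw [hx.backward hπ le_rfl hb hj.le, hx.backward hσ le_rfl (h1 ▸ hb) hj.le]
  rw [hx.fixed hπ hf hb hj, hx.fixed hσ (h0 ▸ hf) (h1 ▸ hb) hj]

end IsThread

end Threads

namespace FigureEight

variable {n : ℕ}

def pathLength (n : ℕ) : Fin 3 → ℕ := ![n, 3 * n + 2, 3 * n + 2]

def strand : Fin 3 → ℕ → F8V n :=
  ![fun i => if h : i < n then .inr (.inl ⟨i, h⟩) else .inl 1,
    fun i => if h : i < 3 * n + 2 then .inr (.inr (.inl ⟨i, h⟩)) else .inl 1,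
    fun i => if h : i < 3 * n + 2 then .inr (.inr (.inr ⟨i, h⟩)) else .inl 1]

/-- `path p` runs from junction `0` through the inner vertices of strand `p` to junction `1`;
strand `0` is the short one, a single edge when `n = 0`. -/
def path (p : Fin 3) : ℕ → F8V n
  | 0 => .inl 0
  | i + 1 => strand p i

lemma adj_iff {v w : F8V n} :
    (figureEight n).Adj v w ↔ v ≠ w ∧ (F8Rel n v w ∨ F8Rel n w v) :=
  fromRel_adj ..

lemma adj_path_succ {p : Fin 3} {i : ℕ} (hi : i ≤ pathLength n p) :
    (figureEight n).Adj (path p i) (path p (i + 1)) := by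
  fin_cases p <;> rcases i with _ | i <;> simp [pathLength] at hi <;>
    simp [adj_iff, F8Rel, path, strand] <;> split_ifs <;> simp [Fin.ext_iff] <;> omega

lemma eq_path_of_adj_path {p : Fin 3} {j : ℕ} (hj : j < pathLength n p) {v : F8V n}
    (h : (figureEight n).Adj (path p (j + 1)) v) : v = path p j ∨ v = path p (j + 2) := by
  fin_cases p <;> rcases v with a | k | k | k <;> rcases j with _ | j <;>
    simp [pathLength] at hj <;>
    simp [adj_iff, F8Rel, path, strand, hj] at h ⊢
  all_goals (try split_ifs) <;> simp only [Sum.inr.injEq, Sum.inl.injEq, or_false, false_or,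
    Fin.ext_iff, Fin.val_one, Fin.val_zero] at h ⊢ <;> omega

lemma exists_path_one_of_adj {v : F8V n} (h : (figureEight n).Adj (.inl 0) v) :
    ∃ p, v = path p 1 := by
  rcases v with a | k | k | k <;> [use 0; use 0; use 1; use 2] <;>
    simp [adj_iff, F8Rel, path, strand] at h ⊢ <;> (try split_ifs) <;>
    (try simp only [Sum.inr.injEq, Sum.inl.injEq, Fin.ext_iff, Fin.val_zero, Fin.val_one]
      at h ⊢) <;> omega

lemma exists_path_pathLength_of_adj {v : F8V n} (h : (figureEight n).Adj (.inl 1) v) :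
    ∃ p, v = path p (pathLength n p) := by
  rcases v with a | k | k | k <;> [(use 0; cases n); (use 0; cases n); use 1; use 2] <;>
    simp [adj_iff, F8Rel, path, strand, pathLength] at h ⊢ <;>
    (try simp only [Fin.ext_iff] at h ⊢) <;> omega

lemma path_zero (p : Fin 3) : (path p 0 : F8V n) = .inl 0 := rfl

lemma path_pathLength_succ (p : Fin 3) : (path p (pathLength n p + 1) : F8V n) = .inl 1 := by
  fin_cases p <;> simp [path, strand, pathLength]

lemma eq_junction_or_eq_path (v : F8V n) :
    v = .inl 0 ∨ v = .inl 1 ∨ ∃ p j, j < pathLength n p ∧ v = path p (j + 1) := by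
  rcases v with a | k | k | k
  · fin_cases a <;> simp
  · exact Or.inr (Or.inr ⟨0, k, k.2, by simp [path, strand]⟩)
  · exact Or.inr (Or.inr ⟨1, k, k.2, by simp [path, strand]⟩)
  · exact Or.inr (Or.inr ⟨2, k, k.2, by simp [path, strand]⟩)

lemma isThread_path (p : Fin 3) : IsThread (figureEight n) (path p) (pathLength n p) :=
  ⟨fun _ hi => adj_path_succ hi, fun _ hj _ hv => eq_path_of_adj_path hj hv⟩

/-- Either no robot crosses a junction, or the robots rotate around the cycle formed by two
distinct strands, leaving junction `0` along `p` and junction `1` along `q`. -/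
def junctionImages (n : ℕ) : Set (F8V n × F8V n) :=
  insert (.inl 0, .inl 1)
    ((fun pq : Fin 3 × Fin 3 => (path pq.1 1, path pq.2 (pathLength n pq.2))) ''
      {pq | pq.1 ≠ pq.2})

lemma ncard_junctionImages_le : (junctionImages n).ncard ≤ 7 := by
  have h6 : ({pq : Fin 3 × Fin 3 | pq.1 ≠ pq.2}).ncard = 6 := by
    rw [Set.ncard_eq_toFinset_card']; rfl
  calc (junctionImages n).ncard ≤ ({pq : Fin 3 × Fin 3 | pq.1 ≠ pq.2}).ncard + 1 :=
        (Set.ncard_insert_le _ _).trans (Nat.add_le_add_right Set.ncard_image_le 1)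
    _ = 7 := by rw [h6]

lemma mem_junctionImages {π : Perm (F8V n)} (hπ : IsMovePerm (figureEight n) π) :
    (π (.inl 0), π (.inl 1)) ∈ junctionImages n := by
  rcases hπ.1 (.inl 0) with hu | hu
  · left
    refine Prod.ext hu ?_
    rcases hπ.1 (.inl 1) with hw | hw
    · exact hw
    obtain ⟨q, hq⟩ := exists_path_pathLength_of_adj hw
    have := (isThread_path q).backward hπ le_rfl (by rwa [path_pathLength_succ]) (Nat.zero_le _)
    rw [path_zero, ← hu] at this
    exact absurd (π.injective this) (adj_path_succ (Nat.zero_le _)).ne'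
  · right
    obtain ⟨p, hp⟩ := exists_path_one_of_adj hu
    have hlast := (isThread_path p).forward hπ (Nat.zero_le _) hp le_rfl
    rw [path_pathLength_succ] at hlast
    have hne := (adj_path_succ (le_refl (pathLength n p))).ne
    rw [path_pathLength_succ] at hne
    rcases hπ.1 (.inl 1) with hw | hw
    · exact absurd (π.injective (hlast.trans hw.symm)) hne
    obtain ⟨q, hq⟩ := exists_path_pathLength_of_adj hw
    refine ⟨(p, q), fun hpq => hne (hπ.2 _ _ hlast ?_), Prod.ext hp.symm hq.symm⟩
    rw [hq, show p = q from hpq]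

lemma eq_of_apply_junctions {π σ : Perm (F8V n)} (hπ : IsMovePerm (figureEight n) π)
    (hσ : IsMovePerm (figureEight n) σ) (hu : π (.inl 0) = σ (.inl 0))
    (hw : π (.inl 1) = σ (.inl 1)) : π = σ := by
  ext v
  rcases eq_junction_or_eq_path v with rfl | rfl | ⟨p, j, hj, rfl⟩
  · rw [hu]
  · rw [hw]
  · exact (isThread_path p).eq_of_ends hπ hσ hu (by rwa [path_pathLength_succ]) hj

lemma ncard_isMovePerm_le : {π | IsMovePerm (figureEight n) π}.ncard ≤ 7 :=
  (Set.ncard_le_ncard_of_injOn (fun π => (π (.inl 0), π (.inl 1)))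
    (fun _ hπ => mem_junctionImages hπ)
    fun _ hπ _ hσ h => eq_of_apply_junctions hπ hσ (congrArg Prod.fst h) (congrArg Prod.snd h)
  ).trans ncard_junctionImages_le

end FigureEight

/-- On each figure-8 graph, from any initial configuration there is a goal
configuration every solution to which has makespan `T` with `7^T ≥ N!`,
where `N = 7n + 6` is the number of vertices; hence the minimum makespan
is `Ω(N log N)`, superlinear in `N`. -/
theorem figure8_superlinear_makespan (n : ℕ) (XI : Equiv.Perm (F8V n)) :
    ∃ XG : Equiv.Perm (F8V n),
      ∀ (T : ℕ) (Xs : ℕ → Equiv.Perm (F8V n)),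
        IsSolution (figureEight n) XI XG T Xs →
          Nat.factorial (7 * n + 6) ≤ 7 ^ T := by
  have hcard : Nat.card (F8V n) = 7 * n + 6 := by
    simp only [Nat.card_eq_fintype_card, Fintype.card_sum, Fintype.card_fin]; omega
  rw [← hcard]
  exact exists_factorial_le_pow_makespan (by norm_num) FigureEight.ncard_isMovePerm_le XI
end

section
/- There exists an absolute integer constant C such that for all integers m, n with m ≥ n ≥ 2 and m ≥ 3, for every configuration X on the m × n grid graph G, and for every set E' of pairwise vertex-disjoint edges of G (a matching), there is a solution of makespan at most C from X to the configuration Y defined by: Y(r) = v if X(r) = u and {u, v} ∈ E', Y(r) = u if X(r) = v and {u, v} ∈ E', and Y(r) = X(r) if X(r) is not an endpoint of any edge of E'. (The flip operation on any matching of a grid can be completed in a constant number of steps.) -/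
/-!
A single edge of the grid is swapped in `5` steps inside a `3 × 2` window, using rotations of
the window's two squares and of its outer hexagon. The edges of the matching fall into `30`
classes according to their orientation and the coordinates of their lower corner modulo `5` and
`3`; within one class the windows of different edges are disjoint, so all swaps of a class run in
parallel, and the flip takes `30 * 5 = 150` steps.
-/
open SimpleGraph

def gridGraph (m n : ℕ) : SimpleGraph (Fin m × Fin n) :=
  (pathGraph m) □ (pathGraph n)

open Equiv Function

namespace Equiv.Perm

variable {α β : Type*}

theorem viaEmbedding_swap [DecidableEq α] [DecidableEq β] (f : α ↪ β) (a b : α) :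
    (swap a b).viaEmbedding f = swap (f a) (f b) := by
  ext x
  by_cases hx : x ∈ Set.range f
  · obtain ⟨y, rfl⟩ := hx
    rw [viaEmbedding_apply, f.injective.swap_apply]
  · rw [viaEmbedding_apply_of_notMem _ _ _ hx, swap_apply_of_ne_of_ne] <;>
      rintro rfl <;> exact hx ⟨_, rfl⟩

theorem Disjoint.mul_apply_cases {σ τ : Perm α} (h : σ.Disjoint τ) (v : α) :
    (τ v = v ∧ (σ * τ) v = σ v) ∨ (σ v = v ∧ (σ * τ) v = τ v) := by
  by_cases hτ : τ v = v
  · exact Or.inl ⟨hτ, by rw [mul_apply, hτ]⟩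
  · refine Or.inr ⟨(h v).resolve_right hτ, ?_⟩
    rw [mul_apply, (h (τ v)).resolve_right fun h' => hτ (τ.injective h')]

theorem swap_mul_apply_of_involutive [DecidableEq α] {σ : Perm α} (hσ : Involutive σ)
    (v w : α) : (swap v (σ v) * σ) w = if w = v ∨ w = σ v then w else σ w := by
  have := hσ v
  have := hσ w
  have : σ w = σ v → w = v := fun h => σ.injective h
  rw [mul_apply, swap_apply_def]
  grind

theorem involutive_swap_mul [DecidableEq α] {σ : Perm α} (hσ : Involutive σ) (v : α) :
    Involutive (swap v (σ v) * σ) := by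
  intro w
  have := hσ v
  have := hσ w
  have : σ w = σ v → w = v := fun h => σ.injective h
  have : σ w = v → w = σ v := fun h => h ▸ (hσ w).symm
  rw [swap_mul_apply_of_involutive hσ, swap_mul_apply_of_involutive hσ]
  grind

theorem swap_mul_apply_of_ne [DecidableEq α] {σ : Perm α} (hσ : Involutive σ) {v w : α}
    (hw : (swap v (σ v) * σ) w ≠ w) : w ≠ v ∧ w ≠ σ v ∧ (swap v (σ v) * σ) w = σ w := by
  rw [swap_mul_apply_of_involutive hσ] at hw ⊢
  split_ifs at hw ⊢ with h
  · exact absurd rfl hw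
  · exact (not_or.mp h).elim fun h1 h2 => ⟨h1, h2, rfl⟩

section Colors

variable {ι : Type*} [DecidableEq ι] (σ : Perm α) (κ : α → ι) (hκ : ∀ v, κ (σ v) = κ v)

def restrictColors (s : Finset ι) : Perm α :=
  ofSubtype (σ.subtypePerm (p := fun v => κ v ∈ s) fun v => by rw [hκ])

theorem restrictColors_apply (s : Finset ι) (v : α) :
    restrictColors σ κ hκ s v = if κ v ∈ s then σ v else v := by
  unfold restrictColors
  split_ifs with hv
  exacts [ofSubtype_subtypePerm_of_mem _ hv, ofSubtype_subtypePerm_of_not_mem _ hv]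

theorem involutive_restrictColors (hσ : Involutive σ) (s : Finset ι) :
    Involutive (restrictColors σ κ hκ s) := by
  intro v
  have := hσ v
  simp only [restrictColors_apply]
  split_ifs <;> simp_all

theorem restrictColors_apply_of_ne {s : Finset ι} {v : α} (hv : restrictColors σ κ hκ s v ≠ v) :
    κ v ∈ s ∧ restrictColors σ κ hκ s v = σ v := by
  rw [restrictColors_apply] at hv ⊢
  split_ifs at hv ⊢ with h
  exacts [⟨h, rfl⟩, absurd rfl hv]

theorem restrictColors_empty : restrictColors σ κ hκ ∅ = 1 := by
  ext v
  simp [restrictColors_apply]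

theorem restrictColors_univ [Fintype ι] : restrictColors σ κ hκ Finset.univ = σ := by
  ext v
  simp [restrictColors_apply]

theorem restrictColors_insert {c : ι} {s : Finset ι} (hc : c ∉ s) :
    restrictColors σ κ hκ (insert c s) =
      restrictColors σ κ hκ {c} * restrictColors σ κ hκ s := by
  ext v
  simp only [mul_apply, restrictColors_apply, Finset.mem_insert, Finset.mem_singleton]
  split_ifs <;> simp_all

end Colors

end Equiv.Perm

variable {V W : Type*} {G : SimpleGraph V}

variable (G) in
def IsStep (π : Perm V) : Prop :=
  (∀ v, π v = v ∨ G.Adj v (π v)) ∧ ∀ v w, v ≠ w → ¬(π v = w ∧ π w = v)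

instance [Fintype V] [DecidableEq V] [DecidableRel G.Adj] (π : Perm V) :
    Decidable (IsStep G π) := by
  unfold IsStep
  infer_instance

variable (G) in
/-- `Routable G S σ k`: the robot configuration `X` can be turned into `σ * X` by `k` steps, none
of which moves a robot outside `S`. The constructor `step` performs `π` first. -/
inductive Routable (S : Set V) : Perm V → ℕ → Prop
  | zero : Routable S 1 0
  | step {σ π : Perm V} {k : ℕ} :
      Routable S σ k → IsStep G π → (∀ v ∉ S, π v = v) → Routable S (σ * π) (k + 1)

namespace IsStep

theorem one : IsStep G 1 :=
  ⟨fun _ => Or.inl rfl, fun _ _ hvw h => hvw h.1⟩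

theorem isMove {π : Perm V} (h : IsStep G π) (X : Perm V) : IsMove G X (π * X) :=
  ⟨fun r => h.1 (X r), fun _ _ _ ⟨h1, h2, h3⟩ => h.2 _ _ h3 ⟨h1, h2⟩⟩

theorem mul_of_disjoint {π ρ : Perm V} (hπ : IsStep G π) (hρ : IsStep G ρ) (h : π.Disjoint ρ) :
    IsStep G (π * ρ) := by
  refine ⟨fun v => ?_, fun v w hvw ⟨hv, hw⟩ => ?_⟩
  · rcases h.mul_apply_cases v with ⟨-, hv⟩ | ⟨-, hv⟩ <;> rw [hv]
    exacts [hπ.1 v, hρ.1 v]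
  · rcases h.mul_apply_cases v with ⟨hρv, hv'⟩ | ⟨hπv, hv'⟩ <;>
      rcases h.mul_apply_cases w with ⟨hρw, hw'⟩ | ⟨hπw, hw'⟩
    · exact hπ.2 v w hvw ⟨hv' ▸ hv, hw' ▸ hw⟩
    · exact hvw (ρ.injective (by rw [hρv, ← hw', hw]))
    · exact hvw (π.injective (by rw [hπv, ← hw', hw]))
    · exact hρ.2 v w hvw ⟨hv' ▸ hv, hw' ▸ hw⟩

theorem viaEmbedding {H : SimpleGraph W} (f : G ↪g H) {π : Perm V} (h : IsStep G π) :
    IsStep H (π.viaEmbedding f.toEmbedding) := by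
  have happ : ∀ y, π.viaEmbedding f.toEmbedding (f y) = f (π y) :=
    Perm.viaEmbedding_apply π f.toEmbedding
  refine ⟨fun v => ?_, fun v w hvw ⟨hv, hw⟩ => ?_⟩
  · by_cases hv : v ∈ Set.range f
    · obtain ⟨y, rfl⟩ := hv
      rw [happ]
      exact (h.1 y).imp (congrArg f) f.map_rel_iff.mpr
    · exact Or.inl (Perm.viaEmbedding_apply_of_notMem _ _ _ hv)
  · by_cases hvr : v ∈ Set.range f
    · obtain ⟨y, rfl⟩ := hvr
      rw [happ] at hv
      subst hv
      rw [happ] at hw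
      exact h.2 y (π y) (fun h => hvw (congrArg f h)) ⟨rfl, f.injective hw⟩
    · exact hvw (Perm.viaEmbedding_apply_of_notMem _ _ _ hvr ▸ hv)

end IsStep

namespace Routable

variable {S T : Set V} {σ τ : Perm V} {j k : ℕ}

theorem fixes (h : Routable G S σ k) : ∀ v ∉ S, σ v = v := by
  induction h with
  | zero => exact fun _ _ => rfl
  | step _ _ hπ ih => intro v hv; rw [Perm.mul_apply, hπ v hv, ih v hv]

theorem mono (h : Routable G S σ k) (hST : S ⊆ T) : Routable G T σ k := by
  induction h with
  | zero => exact zero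
  | step _ hπ hπS ih => exact ih.step hπ fun v hv => hπS v fun hvS => hv (hST hvS)

theorem succ (h : Routable G S σ k) : Routable G S σ (k + 1) :=
  mul_one σ ▸ h.step IsStep.one fun _ _ => rfl

theorem le (h : Routable G S σ k) (hkj : k ≤ j) : Routable G S σ j := by
  induction j, hkj using Nat.le_induction with
  | base => exact h
  | succ _ _ ih => exact ih.succ

theorem mul (hσ : Routable G S σ j) (hτ : Routable G S τ k) : Routable G S (σ * τ) (j + k) := by
  induction hτ with
  | zero => simpa using hσ
  | step _ hπ hπS ih => simpa only [← mul_assoc, ← add_assoc] using ih.step hπ hπS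

theorem of_list {l : List (Perm V)} (hl : ∀ π ∈ l, IsStep G π) :
    Routable G Set.univ l.prod l.length := by
  induction l with
  | nil => exact zero
  | cons π l ih =>
    have hπ : Routable G Set.univ π 1 := one_mul π ▸ zero.step (hl π (by simp)) (by simp)
    simpa [add_comm] using hπ.mul (ih fun ρ hρ => hl ρ (by simp [hρ]))

theorem parallel (hσ : Routable G S σ k) (hτ : Routable G T τ k) (hST : Disjoint S T) :
    Routable G (S ∪ T) (σ * τ) k := by
  have hdisj : ∀ {π ρ : Perm V}, (∀ v ∉ S, π v = v) → (∀ v ∉ T, ρ v = v) → π.Disjoint ρ :=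
    fun hπ hρ v => by
      by_cases hv : v ∈ S
      exacts [Or.inr (hρ v (hST.notMem_of_mem_left hv)), Or.inl (hπ v hv)]
  induction hσ generalizing τ with
  | zero => cases hτ; simpa using zero
  | @step σ π _ _ hπ hπS ih =>
    cases hτ with
    | @step τ ρ _ hτ hρ hρT =>
      have hcomm : Commute π τ := (hdisj hπS hτ.fixes).commute
      rw [mul_assoc, ← mul_assoc π, hcomm.eq, mul_assoc, ← mul_assoc]
      refine (ih hτ).step (hπ.mul_of_disjoint hρ (hdisj hπS hρT)) fun v hv => ?_
      rw [Set.mem_union, not_or] at hv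
      rw [Perm.mul_apply, hρT v hv.2, hπS v hv.1]

theorem map {H : SimpleGraph W} (f : G ↪g H) (h : Routable G S σ k) :
    Routable H (f '' S) (σ.viaEmbedding f.toEmbedding) k := by
  induction h with
  | zero =>
    rw [← Perm.viaEmbeddingHom_apply, map_one]
    exact zero
  | @step σ π _ _ hπ hπS ih =>
    rw [← Perm.viaEmbeddingHom_apply, map_mul, Perm.viaEmbeddingHom_apply,
      Perm.viaEmbeddingHom_apply]
    refine ih.step (hπ.viaEmbedding f) fun v hv => ?_
    by_cases hvr : v ∈ Set.range f
    · obtain ⟨y, rfl⟩ := hvr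
      exact (Perm.viaEmbedding_apply π f.toEmbedding y).trans
        (congrArg f (hπS y fun hy => hv ⟨y, hy, rfl⟩))
    · exact Perm.viaEmbedding_apply_of_notMem _ _ _ hvr

theorem exists_isSolution (h : Routable G S σ k) (X : Perm V) :
    ∃ Xs : ℕ → Perm V, IsSolution G X (σ * X) k Xs := by
  induction h generalizing X with
  | zero => exact ⟨fun _ => X, rfl, by simp, fun t ht => absurd ht (Nat.not_lt_zero t)⟩
  | @step σ π k _ hπ _ ih =>
    obtain ⟨Xs, h0, hk, hmove⟩ := ih (π * X)
    refine ⟨fun | 0 => X | t + 1 => Xs t, rfl, by simpa [mul_assoc] using hk, ?_⟩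
    rintro (_ | t) ht
    · show IsMove G X (Xs 0)
      exact h0 ▸ hπ.isMove X
    · exact hmove t (by omega)

theorem of_restrictColors {ι : Type*} [Fintype ι] [DecidableEq ι] (κ : V → ι)
    (hκ : ∀ v, κ (σ v) = κ v) (h : ∀ c, Routable G S (σ.restrictColors κ hκ {c}) k) :
    Routable G S σ (Fintype.card ι * k) := by
  have key : ∀ s : Finset ι, Routable G S (σ.restrictColors κ hκ s) (s.card * k) := by
    intro s
    induction s using Finset.induction_on with
    | empty => simpa [Perm.restrictColors_empty] using zero
    | insert c s hc ih =>
      rw [Perm.restrictColors_insert σ κ hκ hc, Finset.card_insert_of_notMem hc, add_mul,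
        one_mul, add_comm]
      exact (h c).mul ih
  simpa [Perm.restrictColors_univ] using key Finset.univ

/-- Peel off one edge `{v, σ v}` of the involution `σ` and route it in parallel with the rest. -/
theorem of_involutive [Fintype V] [DecidableEq V] (hσ : Involutive σ) (B : V → V → Set V)
    (hswap : ∀ v, σ v ≠ v → Routable G (B v (σ v)) (swap v (σ v)) k)
    (hdisj : ∀ v w, σ v ≠ v → σ w ≠ w → w ≠ v → w ≠ σ v → Disjoint (B v (σ v)) (B w (σ w))) :
    Routable G {x | ∃ v, σ v ≠ v ∧ x ∈ B v (σ v)} σ k := by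
  induction hn : σ.support.card using Nat.strong_induction_on generalizing σ with
  | _ n ih =>
    rcases eq_or_ne σ 1 with rfl | hσ1
    · exact zero.le (Nat.zero_le k)
    obtain ⟨v, hv⟩ : ∃ v, σ v ≠ v := not_forall.mp fun h => hσ1 (Equiv.ext h)
    set τ := swap v (σ v) * σ
    have hτσ : ∀ w, τ w ≠ w → w ≠ v ∧ w ≠ σ v ∧ τ w = σ w :=
      fun w => Perm.swap_mul_apply_of_ne hσ
    have hτswap : ∀ w, τ w ≠ w → Routable G (B w (τ w)) (swap w (τ w)) k := fun w hw => by
      obtain ⟨-, -, h⟩ := hτσ w hw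
      rw [h] at hw ⊢
      exact hswap w hw
    have hτdisj : ∀ w w', τ w ≠ w → τ w' ≠ w' → w' ≠ w → w' ≠ τ w →
        Disjoint (B w (τ w)) (B w' (τ w')) := fun w w' hw hw' hww' hw'τ => by
      obtain ⟨-, -, h⟩ := hτσ w hw
      obtain ⟨-, -, h'⟩ := hτσ w' hw'
      rw [h] at hw hw'τ ⊢
      rw [h'] at hw' ⊢
      exact hdisj w w' hw hw' hww' hw'τ
    have hτ := ih _ (hn ▸ Perm.card_support_swap_mul hv) (Perm.involutive_swap_mul hσ v) hτswap
      hτdisj rfl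
    have hB : Disjoint (B v (σ v)) {x | ∃ w, τ w ≠ w ∧ x ∈ B w (τ w)} := by
      refine Set.disjoint_left.mpr fun x hx ⟨w, hw, hxw⟩ => ?_
      obtain ⟨h1, h2, h3⟩ := hτσ w hw
      rw [h3] at hw hxw
      exact Set.disjoint_left.mp (hdisj v w hv hw h1 h2) hx hxw
    have := ((hswap v hv).parallel hτ hB).mono (T := {x | ∃ v, σ v ≠ v ∧ x ∈ B v (σ v)})
      fun x hx => by
        rcases hx with hx | ⟨w, hw, hxw⟩
        · exact ⟨v, hv, hx⟩
        · obtain ⟨-, -, h⟩ := hτσ w hw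
          rw [h] at hw hxw
          exact ⟨w, hw, hxw⟩
    rwa [swap_mul_self_mul] at this

end Routable

section Grid

variable {m n : ℕ}

theorem gridGraph_adj {p q : Fin m × Fin n} :
    (gridGraph m n).Adj p q ↔
      (p.2 = q.2 ∧ (p.1.val + 1 = q.1.val ∨ q.1.val + 1 = p.1.val)) ∨
      (p.1 = q.1 ∧ (p.2.val + 1 = q.2.val ∨ q.2.val + 1 = p.2.val)) := by
  rw [gridGraph, boxProd_adj, pathGraph_adj, pathGraph_adj]
  tauto

instance : DecidableRel (gridGraph m n).Adj := fun _ _ =>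
  decidable_of_iff _ gridGraph_adj.symm

/- The rotations of the left square, the right square and the outer hexagon of the `3 × 2` grid,
and words in them (of length at most `5`) realising each of its seven edge swaps. -/
def modelL : Perm (Fin 3 × Fin 2) := [(0, 0), (1, 0), (1, 1), (0, 1)].formPerm
def modelR : Perm (Fin 3 × Fin 2) := [(1, 0), (2, 0), (2, 1), (1, 1)].formPerm
def modelO : Perm (Fin 3 × Fin 2) := [(0, 0), (1, 0), (2, 0), (2, 1), (1, 1), (0, 1)].formPerm

def modelWords : List (List (Perm (Fin 3 × Fin 2))) :=
  [[modelO⁻¹, modelR, modelL], [modelO, modelL⁻¹, modelR⁻¹], [modelO, modelR⁻¹, modelL⁻¹],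
   [modelO⁻¹, modelL, modelR], [modelL⁻¹, modelO⁻¹, modelR, modelL, modelL],
   [modelR, modelO⁻¹, modelL], [modelO, modelL⁻¹, modelO⁻¹, modelL, modelR]]

set_option maxRecDepth 10000 in
theorem modelWords_length_le_and_isStep :
    ∀ l ∈ modelWords, l.length ≤ 5 ∧ ∀ π ∈ l, IsStep (gridGraph 3 2) π := by
  decide

theorem exists_modelWords_prod_eq_swap :
    ∀ a b, (gridGraph 3 2).Adj a b → ∃ l ∈ modelWords, l.prod = swap a b := by
  decide

theorem routable_swap_model {a b : Fin 3 × Fin 2} (hab : (gridGraph 3 2).Adj a b) :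
    Routable (gridGraph 3 2) Set.univ (swap a b) 5 := by
  obtain ⟨l, hl, hprod⟩ := exists_modelWords_prod_eq_swap a b hab
  obtain ⟨hlen, hsteps⟩ := modelWords_length_le_and_isStep l hl
  exact hprod ▸ (Routable.of_list hsteps).le hlen

def window (s t : ℕ) (hs : s + 3 ≤ m) (ht : t + 2 ≤ n) : gridGraph 3 2 ↪g gridGraph m n where
  toFun p := (⟨s + p.1, by omega⟩, ⟨t + p.2, by omega⟩)
  inj' p q h := by
    simp only [Prod.ext_iff, Fin.ext_iff] at h ⊢
    omega
  map_rel_iff' {p q} := by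
    change (gridGraph m n).Adj (⟨s + p.1, _⟩, ⟨t + p.2, _⟩) (⟨s + q.1, _⟩, ⟨t + q.2, _⟩) ↔ _
    simp only [gridGraph_adj, Fin.ext_iff]
    omega

@[simp]
theorem window_apply (s t : ℕ) (hs : s + 3 ≤ m) (ht : t + 2 ≤ n) (p : Fin 3 × Fin 2) :
    window s t hs ht p = (⟨s + p.1, by omega⟩, ⟨t + p.2, by omega⟩) :=
  rfl

theorem mem_range_window {s t : ℕ} (hs : s + 3 ≤ m) (ht : t + 2 ≤ n) {x : Fin m × Fin n}
    (h1 : s ≤ x.1) (h2 : x.1 ≤ s + 2) (h3 : t ≤ x.2) (h4 : x.2 ≤ t + 1) :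
    x ∈ Set.range (window s t hs ht) :=
  ⟨(⟨x.1 - s, by omega⟩, ⟨x.2 - t, by omega⟩), by ext <;> simp <;> omega⟩

/-- A region around the edge `{u, w}` containing every window used to swap it. -/
def box (u w : Fin m × Fin n) : Set (Fin m × Fin n) :=
  {x | min u.1.val w.1.val ≤ x.1 + 2 ∧ x.1 ≤ min u.1.val w.1.val + 2 ∧
    min u.2.val w.2.val ≤ x.2 + 1 ∧ x.2 ≤ min u.2.val w.2.val + 1}

theorem routable_swap_box (hm : 3 ≤ m) (hn : 2 ≤ n) {u w : Fin m × Fin n}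
    (huw : (gridGraph m n).Adj u w) : Routable (gridGraph m n) (box u w) (swap u w) 5 := by
  have hadj := gridGraph_adj.mp huw
  set s := min (min u.1.val w.1.val) (m - 3)
  set t := min (min u.2.val w.2.val) (n - 2)
  have hs : s + 3 ≤ m := by omega
  have ht : t + 2 ≤ n := by omega
  set f := window s t hs ht
  obtain ⟨a, ha⟩ : u ∈ Set.range f :=
    mem_range_window hs ht (by omega) (by omega) (by omega) (by omega)
  obtain ⟨b, hb⟩ : w ∈ Set.range f :=
    mem_range_window hs ht (by omega) (by omega) (by omega) (by omega)
  have := (routable_swap_model (f.map_rel_iff.mp (ha ▸ hb ▸ huw))).map f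
  rw [Set.image_univ, Perm.viaEmbedding_swap, RelEmbedding.coe_toEmbedding, ha, hb] at this
  refine this.mono ?_
  rintro _ ⟨p, rfl⟩
  simp only [box, f, window_apply, Set.mem_ofPred_eq]
  omega

/-- Same-class edges without a common vertex have disjoint boxes: their base points differ by at
least `5` in the first or `3` in the second coordinate, or coincide, and then the edges do. -/
def edgeClass (u w : Fin m × Fin n) : Fin 5 × Fin 3 × Bool :=
  (⟨min u.1.val w.1.val % 5, Nat.mod_lt _ (by norm_num)⟩,
    ⟨min u.2.val w.2.val % 3, Nat.mod_lt _ (by norm_num)⟩, decide (u.1 = w.1))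

theorem edgeClass_comm (u w : Fin m × Fin n) : edgeClass u w = edgeClass w u := by
  simp only [edgeClass, min_comm, eq_comm]

theorem disjoint_box_of_edgeClass_eq {u w u' w' : Fin m × Fin n} (huw : (gridGraph m n).Adj u w)
    (huw' : (gridGraph m n).Adj u' w') (hc : edgeClass u w = edgeClass u' w')
    (h1 : u' ≠ u) (h2 : u' ≠ w) :
    Disjoint (box u w) (box u' w') := by
  refine Set.disjoint_left.mpr fun x hx hx' => ?_
  simp only [edgeClass, Prod.mk.injEq, Fin.mk.injEq, decide_eq_decide] at hc
  obtain ⟨hc1, hc2, hc3⟩ := hc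
  simp only [box, Set.mem_ofPred_eq] at hx hx'
  have hbase : min u.1.val w.1.val = min u'.1.val w'.1.val ∧
      min u.2.val w.2.val = min u'.2.val w'.2.val := by
    omega
  rw [gridGraph_adj] at huw huw'
  simp only [Ne, Prod.ext_iff, Fin.ext_iff] at huw huw' hc3 h1 h2
  clear hx hx' hc1 hc2
  by_cases h : u.1.val = w.1.val
  · have h' := hc3.mp h
    omega
  · have h' := mt hc3.mpr h
    omega

theorem routable_gridGraph_of_involutive (hm : 3 ≤ m) (hn : 2 ≤ n) {σ : Perm (Fin m × Fin n)}
    (hσ : Involutive σ) (hadj : ∀ v, σ v ≠ v → (gridGraph m n).Adj v (σ v)) :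
    Routable (gridGraph m n) Set.univ σ 150 := by
  set κ := fun v => edgeClass v (σ v)
  have hκ : ∀ v, κ (σ v) = κ v := fun v => by simp only [κ, hσ v, edgeClass_comm]
  have hclass : ∀ c, Routable (gridGraph m n) Set.univ (σ.restrictColors κ hκ {c}) 5 := by
    intro c
    set σc := σ.restrictColors κ hκ {c}
    have hmoved : ∀ v, σc v ≠ v → κ v = c ∧ σc v = σ v := fun v hv => by
      simpa using Perm.restrictColors_apply_of_ne σ κ hκ hv
    refine (Routable.of_involutive (Perm.involutive_restrictColors σ κ hκ hσ {c}) box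
      (fun v hv => ?_) (fun v w hv hw hwv hwσv => ?_)).mono (Set.subset_univ _)
    · obtain ⟨-, hv'⟩ := hmoved v hv
      rw [hv'] at hv ⊢
      exact routable_swap_box hm hn (hadj v hv)
    · obtain ⟨hcv, hv'⟩ := hmoved v hv
      obtain ⟨hcw, hw'⟩ := hmoved w hw
      rw [hv'] at hv hwσv ⊢
      rw [hw'] at hw ⊢
      exact disjoint_box_of_edgeClass_eq (hadj v hv) (hadj w hw) (hcv.trans hcw.symm) hwv hwσv
  simpa using Routable.of_restrictColors κ hκ hclass

end Grid

section Flip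

variable {V : Type*} {E' : Set (Sym2 V)} {X Y : Perm V}

theorem flip_apply_of_mem (hflip : ∀ r u v, s(u, v) ∈ E' → X r = u → Y r = v) {v w : V}
    (h : s(v, w) ∈ E') : (Y * X⁻¹) v = w :=
  hflip _ v w h (X.apply_symm_apply v)

theorem flip_apply_eq_or_mem (hflip : ∀ r u v, s(u, v) ∈ E' → X r = u → Y r = v)
    (hfix : ∀ r, (∀ e ∈ E', X r ∉ e) → Y r = X r) (v : V) :
    (Y * X⁻¹) v = v ∨ s(v, (Y * X⁻¹) v) ∈ E' := by
  by_cases hv : ∃ e ∈ E', v ∈ e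
  · obtain ⟨e, he, hve⟩ := hv
    obtain ⟨w, rfl⟩ := Sym2.mem_iff_exists.mp hve
    rw [flip_apply_of_mem hflip he]
    exact Or.inr he
  · refine Or.inl ?_
    rw [Perm.mul_apply, hfix _ fun e he hve => hv ⟨e, he, by simpa using hve⟩]
    exact X.apply_symm_apply v

theorem involutive_flip (hflip : ∀ r u v, s(u, v) ∈ E' → X r = u → Y r = v)
    (hfix : ∀ r, (∀ e ∈ E', X r ∉ e) → Y r = X r) : Involutive (Y * X⁻¹) := fun v => by
  rcases flip_apply_eq_or_mem hflip hfix v with h | h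
  · rw [h, h]
  · exact flip_apply_of_mem hflip (Sym2.eq_swap ▸ h)

end Flip

/-- The flip operation: on any `m × n` grid (`m ≥ n ≥ 2`, `m ≥ 3`), for any
configuration `X` and any matching `E'` of the grid, the configuration obtained by
exchanging the two robots on the endpoints of each edge of `E'` (all other robots
staying put) can be reached in at most `C` steps, for an absolute constant `C`. -/
theorem flip_constant_steps :
    ∃ C : ℕ,
      ∀ m n : ℕ, 2 ≤ n → n ≤ m → 3 ≤ m →
        ∀ X : Equiv.Perm (Fin m × Fin n),
          ∀ E' : Set (Sym2 (Fin m × Fin n)),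
            E' ⊆ (gridGraph m n).edgeSet →
            (∀ e ∈ E', ∀ f ∈ E', e ≠ f → ∀ v : Fin m × Fin n, ¬(v ∈ e ∧ v ∈ f)) →
            ∀ Y : Equiv.Perm (Fin m × Fin n),
              (∀ (r : Fin m × Fin n) (u v : Fin m × Fin n),
                  s(u, v) ∈ E' → X r = u → Y r = v) →
              (∀ r : Fin m × Fin n, (∀ e ∈ E', X r ∉ e) → Y r = X r) →
              ∃ (T : ℕ) (Xs : ℕ → Equiv.Perm (Fin m × Fin n)),
                IsSolution (gridGraph m n) X Y T Xs ∧ T ≤ C := by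
  refine ⟨150, fun m n hn _ hm X E' hE' _ Y hflip hfix => ?_⟩
  have hadj : ∀ v, (Y * X⁻¹) v ≠ v → (gridGraph m n).Adj v ((Y * X⁻¹) v) := fun v hv =>
    hE' ((flip_apply_eq_or_mem hflip hfix v).resolve_left hv)
  obtain ⟨Xs, hXs⟩ :=
    (routable_gridGraph_of_involutive hm hn (involutive_flip hflip hfix) hadj).exists_isSolution X
  rw [inv_mul_cancel_right] at hXs
  exact ⟨150, Xs, hXs, le_rfl⟩
end

section
/- There exists an integer M such that for all integers m, n with m ≥ n ≥ 2, m ≥ 3, and m·n ≥ M, and for every fixed configuration X_G on the m × n grid graph G, the number of configurations X_I for which the instance (G, X_I, X_G) admits a solution of makespan at most (m + n)/4 is at most (1/2)^{m/4} · (mn)!. (The fraction of instances on a large grid with makespan o(m + n) is at most (1/2)^{m/4}.) -/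
open SimpleGraph

/-!
A move changes the first coordinate (the column) of every robot by at most one. Hence, if the
makespan is at most `(m + n) / 4`, each of the `⌊m/4⌋ n` robots whose goal lies in the first
`⌊m/4⌋` columns starts in one of the first `x = ⌊m/4⌋ + ⌊(m + n)/4⌋` columns. A permutation
sends a given `k`-set into a given `s`-set of an `N`-set for at most a `(s/N)^k` fraction of all
`N!` permutations, so at most `(x/m)^(⌊m/4⌋ n) (mn)!` initial configurations qualify. Finally
`x/m ≤ 5/8` when `2n ≤ m`, while otherwise `x/m ≤ 3/4` and `n ≥ 8`; in both cases the power is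
at most `(1/2)^(m/4)`.
-/

open Finset Equiv Nat

section Displacement

variable {V : Type*} {G : SimpleGraph V} {f : V → ℕ}

theorem IsMove.le_add_one (hf : ∀ u v, G.Adj u v → f u ≤ f v + 1) {X Y : Perm V}
    (h : IsMove G X Y) (r : V) : f (X r) ≤ f (Y r) + 1 := by
  rcases h.1 r with h | h
  · rw [h]; omega
  · exact hf _ _ h

theorem IsSolution.le_add (hf : ∀ u v, G.Adj u v → f u ≤ f v + 1) {XI XG : Perm V} {T : ℕ}
    {Xs : ℕ → Perm V} (h : IsSolution G XI XG T Xs) (r : V) : f (XI r) ≤ f (XG r) + T := by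
  obtain ⟨rfl, rfl, hmove⟩ := h
  suffices ∀ t ≤ T, f (Xs 0 r) ≤ f (Xs t r) + t from this T le_rfl
  intro t
  induction t with
  | zero => simp
  | succ t ih =>
    intro ht
    have hstep := (hmove t ht).le_add_one hf r
    have hprev := ih (by omega)
    omega

end Displacement

theorem gridGraph_adj_fst_le {m n : ℕ} {u v : Fin m × Fin n} (h : (gridGraph m n).Adj u v) :
    (u.1 : ℕ) ≤ v.1 + 1 := by
  rcases boxProd_adj.1 h with ⟨h, -⟩ | ⟨-, h⟩
  · rcases pathGraph_adj.1 h with h | h <;> omega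
  · rw [h]; omega

theorem card_filter_fst_lt {m n k : ℕ} (h : k ≤ m) :
    #{v : Fin m × Fin n | (v.1 : ℕ) < k} = k * n := by
  rw [← univ_product_univ, filter_product_left (fun i : Fin m => (i : ℕ) < k), card_product, Fin.card_filter_val_lt,
    Finset.card_univ, Fintype.card_fin, min_eq_right h]

theorem Nat.descFactorial_mul_pow_le {s N : ℕ} (h : s ≤ N) (k : ℕ) :
    s.descFactorial k * N ^ k ≤ s ^ k * N.descFactorial k := by
  induction k with
  | zero => simp
  | succ k ih =>
    have hstep : (s - k) * N ≤ s * (N - k) := by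
      rw [Nat.sub_mul, Nat.mul_sub]
      exact Nat.sub_le_sub_left (by rw [mul_comm]; exact Nat.mul_le_mul_left k h) _
    calc s.descFactorial (k + 1) * N ^ (k + 1)
        = ((s - k) * N) * (s.descFactorial k * N ^ k) := by
          rw [descFactorial_succ, pow_succ]; ring
      _ ≤ (s * (N - k)) * (s ^ k * N.descFactorial k) := Nat.mul_le_mul hstep ih
      _ = s ^ (k + 1) * N.descFactorial (k + 1) := by rw [descFactorial_succ, pow_succ]; ring

section PermCount

variable {V : Type*} [Fintype V] [DecidableEq V]

theorem card_perm_restrict_eq_le (A : Finset V) (g : A → V) :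
    #{π : Perm V | (fun a : A => π a) = g} ≤ (Fintype.card V - #A)! := by
  rcases Finset.eq_empty_or_nonempty {π : Perm V | (fun a : A => π a) = g} with hempty | ⟨π₀, hπ₀⟩
  · simp [hempty]
  -- left multiplication by `π₀⁻¹` maps the fibre into the pointwise stabiliser of `A`
  calc #{π : Perm V | (fun a : A => π a) = g}
      ≤ #{σ : Perm V | ∀ a, ¬a ∉ A → σ a = a} := by
        refine card_le_card_of_injOn (π₀⁻¹ * ·) (fun π hπ => ?_) (mul_right_injective _).injOn
        simp only [coe_filter, mem_filter, mem_univ, true_and, Set.mem_ofPred_eq] at hπ hπ₀ ⊢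
        intro a ha
        have := congrFun (hπ.trans hπ₀.symm) ⟨a, not_not.1 ha⟩
        simp [this]
    _ = Fintype.card (Perm {a // a ∉ A}) := by
        rw [← Fintype.card_subtype, Fintype.card_congr (Perm.subtypeEquivSubtypePerm _)]
    _ = (Fintype.card V - #A)! := by
        rw [Fintype.card_perm, Fintype.card_subtype_compl, Fintype.card_coe]

theorem card_perm_mapsTo_le (A S : Finset V) :
    #{π : Perm V | ∀ a ∈ A, π a ∈ S} ≤ (#S).descFactorial #A * (Fintype.card V - #A)! := by
  let toFun : (A ↪ S) ↪ (A → V) := ⟨fun e a => e a, fun e e' h => by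
    ext a; exact congrFun h a⟩
  have hcard : #(univ.map toFun) = (#S).descFactorial #A := by
    rw [card_map, Finset.card_univ, Fintype.card_embedding_eq, Fintype.card_coe, Fintype.card_coe]
  rw [← hcard, mul_comm]
  refine card_le_mul_card_image_of_maps_to (f := fun π (a : A) => π a) (fun π hπ => ?_) _
    (fun g _ => (card_le_card fun π => by simp).trans (card_perm_restrict_eq_le A g))
  simp only [mem_filter, mem_univ, true_and] at hπ
  exact mem_map.2 ⟨⟨fun a => ⟨π a, hπ a a.2⟩, fun a b h => Subtype.ext (by simpa using h)⟩,
    mem_univ _, rfl⟩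

theorem card_perm_mapsTo_le_div_pow (A S : Finset V) :
    (#{π : Perm V | ∀ a ∈ A, π a ∈ S} : ℝ) ≤
      ((#S : ℝ) / Fintype.card V) ^ #A * (Fintype.card V)! := by
  set N := Fintype.card V
  have hA : #A ≤ N := card_le_univ A
  have hN : (0 : ℝ) < (N : ℝ) ^ #A := by
    rcases A.eq_empty_or_nonempty with rfl | ⟨a, -⟩
    · simp
    · have : 0 < N := Fintype.card_pos_iff.2 ⟨a⟩
      positivity
  rw [div_pow, div_mul_eq_mul_div, le_div_iff₀ hN]
  have key : #{π : Perm V | ∀ a ∈ A, π a ∈ S} * N ^ #A ≤ #S ^ #A * N ! :=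
    calc #{π : Perm V | ∀ a ∈ A, π a ∈ S} * N ^ #A
        ≤ (#S).descFactorial #A * (N - #A)! * N ^ #A :=
          Nat.mul_le_mul_right _ (card_perm_mapsTo_le A S)
      _ = (#S).descFactorial #A * N ^ #A * (N - #A)! := by ring
      _ ≤ #S ^ #A * N.descFactorial #A * (N - #A)! :=
          Nat.mul_le_mul_right _ (Nat.descFactorial_mul_pow_le (card_le_univ S) _)
      _ = #S ^ #A * N ! := by rw [mul_assoc, mul_comm _ (N - #A)!, factorial_mul_descFactorial hA]
  exact_mod_cast key

end PermCount

theorem pow_le_half_rpow {q : ℝ} {a b e m : ℕ} (hq : 0 ≤ q) (hqab : q ^ a ≤ (1 / 2) ^ b)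
    (ha : 0 < a) (hm : a * m ≤ 4 * b * e) : q ^ e ≤ (1 / 2 : ℝ) ^ ((m : ℝ) / 4) := by
  have ha' : (0 : ℝ) < a := by exact_mod_cast ha
  calc q ^ e = (q ^ a) ^ ((e : ℝ) / a) := by
        rw [← Real.rpow_natCast q a, ← Real.rpow_mul hq, mul_div_cancel₀ _ ha'.ne',
          Real.rpow_natCast]
    _ ≤ ((1 / 2) ^ b) ^ ((e : ℝ) / a) := Real.rpow_le_rpow (by positivity) hqab (by positivity)
    _ = (1 / 2) ^ ((b : ℝ) * e / a) := by
        rw [← Real.rpow_natCast, ← Real.rpow_mul (by norm_num), mul_div_assoc]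
    _ ≤ (1 / 2 : ℝ) ^ ((m : ℝ) / 4) := by
        refine Real.rpow_le_rpow_of_exponent_ge (by norm_num) (by norm_num) ?_
        rw [div_le_div_iff₀ (by norm_num) ha']
        exact_mod_cast (by linarith : m * a ≤ b * e * 4)

theorem grid_ratio_pow_le {m n : ℕ} (hn : 2 ≤ n) (hnm : n ≤ m) (hM : 144 ≤ m * n) :
    (((m / 4 + (m + n) / 4 : ℕ) : ℝ) / m) ^ (m / 4 * n) ≤ (1 / 2 : ℝ) ^ ((m : ℝ) / 4) := by
  have hm : (0 : ℝ) < m := by exact_mod_cast (show 0 < m by omega)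
  have ratio_le {p q : ℕ} (hq : 0 < q) (h : q * (m / 4 + (m + n) / 4) ≤ p * m) :
      ((m / 4 + (m + n) / 4 : ℕ) : ℝ) / m ≤ p / q := by
    rw [div_le_div_iff₀ hm (by exact_mod_cast hq)]
    exact_mod_cast (by linarith : (m / 4 + (m + n) / 4) * q ≤ p * m)
  rcases le_or_gt (2 * n) m with h2n | h2n
  · have h12 : 12 ≤ m := by nlinarith
    have hcn := Nat.mul_le_mul_left (m / 4) hn
    calc _ ≤ ((5 : ℕ) / (8 : ℕ) : ℝ) ^ (m / 4 * n) :=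
          pow_le_pow_left₀ (by positivity) (ratio_le (by norm_num) (by omega)) _
      _ ≤ _ := pow_le_half_rpow (a := 3) (b := 2) (by positivity) (by norm_num) (by norm_num)
          (by omega)
  · have h8 : 8 ≤ n := by nlinarith
    have hcn := Nat.mul_le_mul_left (m / 4) h8
    calc _ ≤ ((3 : ℕ) / (4 : ℕ) : ℝ) ^ (m / 4 * n) :=
          pow_le_pow_left₀ (by positivity) (ratio_le (by norm_num) (by omega)) _
      _ ≤ _ := pow_le_half_rpow (a := 4) (b := 1) (by positivity) (by norm_num) (by norm_num)
          (by omega)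

/-- On a sufficiently large `m × n` grid, for every goal configuration `X_G`, at most a
`(1/2)^(m/4)` fraction of the `(mn)!` initial configurations `X_I` admit a solution of
makespan at most `(m+n)/4`. -/
theorem few_instances_with_small_makespan :
    ∃ M : ℕ,
      ∀ m n : ℕ, 2 ≤ n → n ≤ m → 3 ≤ m → M ≤ m * n →
        ∀ XG : Equiv.Perm (Fin m × Fin n),
          (Nat.card {XI : Equiv.Perm (Fin m × Fin n) |
              ∃ (T : ℕ) (Xs : ℕ → Equiv.Perm (Fin m × Fin n)),
                IsSolution (gridGraph m n) XI XG T Xs ∧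
                (T : ℝ) ≤ ((m : ℝ) + n) / 4} : ℝ) ≤
            (1 / 2 : ℝ) ^ ((m : ℝ) / 4) * (Nat.factorial (m * n)) := by
  refine ⟨144, fun m n hn hnm _ hM XG => ?_⟩
  let A : Finset (Fin m × Fin n) := ({v | (v.1 : ℕ) < m / 4} : Finset _).map XG.symm.toEmbedding
  let S : Finset (Fin m × Fin n) := {v | (v.1 : ℕ) < m / 4 + (m + n) / 4}
  have hsub : {XI : Perm (Fin m × Fin n) | ∃ (T : ℕ) (Xs : ℕ → Perm (Fin m × Fin n)),
      IsSolution (gridGraph m n) XI XG T Xs ∧ (T : ℝ) ≤ ((m : ℝ) + n) / 4} ⊆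
      ↑({XI : Perm (Fin m × Fin n) | ∀ r ∈ A, XI r ∈ S} : Finset _) := by
    rintro XI ⟨T, Xs, hsol, hT⟩
    simp only [coe_filter, mem_univ, true_and, Set.mem_ofPred_eq]
    intro r hr
    have hT' : T ≤ (m + n) / 4 := by
      rw [Nat.le_div_iff_mul_le (by norm_num)]
      exact_mod_cast (by linarith : (T : ℝ) * 4 ≤ m + n)
    have hdisp := hsol.le_add (f := fun v => (v.1 : ℕ)) (fun _ _ => gridGraph_adj_fst_le) r
    simp only [A, S, mem_map_equiv, mem_filter, mem_univ, true_and, symm_symm] at hr ⊢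
    omega
  calc _ ≤ (#{XI : Perm (Fin m × Fin n) | ∀ r ∈ A, XI r ∈ S} : ℝ) := by
        exact_mod_cast (Nat.card_mono (Set.toFinite _) hsub).trans_eq (Nat.card_eq_finsetCard _)
    _ ≤ _ := card_perm_mapsTo_le_div_pow A S
    _ = (((m / 4 + (m + n) / 4 : ℕ) : ℝ) / m) ^ (m / 4 * n) * (m * n)! := by
        rw [card_map, card_filter_fst_lt (by omega), card_filter_fst_lt (by omega),
          Fintype.card_prod, Fintype.card_fin, Fintype.card_fin]
        push_cast
        rw [mul_div_mul_right _ _ (by positivity)]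
    _ ≤ _ := by gcongr; exact grid_ratio_pow_le hn hnm hM
end

section
/- For every integer n ≥ 0 and every configuration X on the figure-8 graph F_n (whose vertices are all occupied), the number of configurations Y with Y ≠ X such that (X, Y) is a valid synchronous move is at most 6; each such Y is obtained from X by rotating all robots one step around one of the three cycles of F_n (the cycles formed by the unions of two of the three junction-to-junction paths) in one of the two directions. Consequently, the number of configurations reachable from X by a single synchronous move (including X itself) is at most 7. -/
open SimpleGraph

/-! A move from `X` to `Y` is encoded by the vertex permutation `π = Y * X⁻¹`, sending the
position of each robot to its next position: every vertex goes to itself or to a neighbour,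
and `π` has no 2-cycle. Along a bare path (interior vertices of degree 2) such a permutation
either fixes every interior vertex or shifts all of them one step in a common direction.
In a theta graph, two junctions joined by three bare paths, `π` is therefore the identity as
soon as it fixes a junction; otherwise it rotates one of the three cycles and is determined by
the images of the junctions, which are the first vertex of one path and the last vertex of
another. There are `3 · 2 = 6` such pairs. -/

section

variable {V : Type*} {G : SimpleGraph V} {π π' : Equiv.Perm V}

structure IsMovePerm_s14 (G : SimpleGraph V) (π : Equiv.Perm V) : Prop where
  eq_or_adj : ∀ v, π v = v ∨ G.Adj v (π v)
  eq_of_apply_apply : ∀ v, π (π v) = v → π v = v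

theorem IsMove.isMovePerm {X Y : Equiv.Perm V} (h : IsMove G X Y) : IsMovePerm_s14 G (Y * X⁻¹) where
  eq_or_adj v := by simpa using h.1 (X⁻¹ v)
  eq_of_apply_apply v hv := by
    by_contra hne
    refine h.2 (X⁻¹ v) (X⁻¹ (Y (X⁻¹ v))) (fun h' => hne ?_) ⟨?_, ?_, fun h' => hne ?_⟩
    · simpa using (congrArg X h').symm
    · simp
    · simpa using hv
    · simpa using h'.symm

namespace IsMovePerm_s14

theorem inv_s14 (hπ : IsMovePerm_s14 G π) : IsMovePerm_s14 G π⁻¹ where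
  eq_or_adj v := by
    rcases hπ.eq_or_adj (π⁻¹ v) with h | h
    · exact Or.inl (by simpa using h.symm)
    · exact Or.inr (by simpa using h.symm)
  eq_of_apply_apply v hv := by
    have hu : π (π⁻¹ v) = v := π.apply_symm_apply v
    have hv' : π v = π⁻¹ v := by simpa using (congrArg π hv).symm
    have := hπ.eq_of_apply_apply (π⁻¹ v) (by rw [hu, hv'])
    rw [hu] at this
    exact this.symm

end IsMovePerm_s14

structure IsBarePath (G : SimpleGraph V) (m : ℕ) (w : ℕ → V) : Prop where
  injOn : Set.InjOn w (Set.Iic (m + 1))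
  adj_iff : ∀ k, 1 ≤ k → k ≤ m → ∀ u, G.Adj (w k) u ↔ u = w (k - 1) ∨ u = w (k + 1)

namespace IsBarePath

variable {m k l : ℕ} {w : ℕ → V}

theorem apply_ne (hw : IsBarePath G m w) (hk : k ≤ m + 1) (hl : l ≤ m + 1) (hkl : k ≠ l) :
    w k ≠ w l :=
  fun h => hkl (hw.injOn hk hl h)

theorem reverse (hw : IsBarePath G m w) : IsBarePath G m (fun k => w (m + 1 - k)) where
  injOn k hk l hl h := by
    have := hw.injOn (show m + 1 - k ≤ m + 1 by omega) (show m + 1 - l ≤ m + 1 by omega) h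
    simp only [Set.mem_Iic] at hk hl
    omega
  adj_iff k hk₁ hk₂ u := by
    rw [hw.adj_iff (m + 1 - k) (by omega) (by omega), or_comm,
      show m + 1 - k - 1 = m + 1 - (k + 1) by omega, show m + 1 - k + 1 = m + 1 - (k - 1) by omega]

theorem apply_eq_or (hπ : IsMovePerm_s14 G π) (hw : IsBarePath G m w) (hk₁ : 1 ≤ k) (hk₂ : k ≤ m) :
    π (w k) = w k ∨ π (w k) = w (k - 1) ∨ π (w k) = w (k + 1) :=
  (hπ.eq_or_adj (w k)).imp_right (hw.adj_iff k hk₁ hk₂ _).mp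

theorem apply_succ_of_le (hπ : IsMovePerm_s14 G π) (hw : IsBarePath G m w) (hkl : k ≤ l)
    (hl : l ≤ m) (hk : π (w k) = w (k + 1)) : π (w l) = w (l + 1) := by
  induction l, hkl using Nat.le_induction with
  | base => exact hk
  | succ l hkl ih =>
    have hl' := ih (by omega)
    rcases hw.apply_eq_or hπ (k := l + 1) (by omega) hl with h | h | h
    · exact absurd (π.injective (hl'.trans h.symm)) (hw.apply_ne (by omega) (by omega) (by omega))
    · rw [Nat.add_sub_cancel] at h
      have := hπ.eq_of_apply_apply (w l) (by rw [hl', h])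
      exact absurd (hl'.symm.trans this) (hw.apply_ne (by omega) (by omega) (by omega))
    · exact h

theorem apply_succ (hπ : IsMovePerm_s14 G π) (hw : IsBarePath G m w) (hk : k ≤ m) (hl : l ≤ m)
    (hl' : π (w l) = w (l + 1)) : π (w k) = w (k + 1) := by
  rcases le_total l k with hlk | hkl
  · exact hw.apply_succ_of_le hπ hlk hk hl'
  · -- `π⁻¹` moves the reversed path forward, from index `m - l` up to `m - k`
    have h := hw.reverse.apply_succ_of_le hπ.inv_s14 (k := m - l) (l := m - k) (by omega) (by omega)
      (by
        rw [show m + 1 - (m - l) = l + 1 by omega, show m + 1 - (m - l + 1) = l by omega, ← hl']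
        exact π.symm_apply_apply _)
    rw [show m + 1 - (m - k) = k + 1 by omega, show m + 1 - (m - k + 1) = k by omega] at h
    simpa using (congrArg π h).symm

theorem apply_pred (hπ : IsMovePerm_s14 G π) (hw : IsBarePath G m w) (hk₁ : 1 ≤ k) (hk₂ : k ≤ m + 1)
    (hl₁ : 1 ≤ l) (hl₂ : l ≤ m + 1) (hl' : π (w l) = w (l - 1)) : π (w k) = w (k - 1) := by
  have h := hw.reverse.apply_succ hπ (k := m + 1 - k) (l := m + 1 - l) (by omega) (by omega)
    (by rwa [show m + 1 - (m + 1 - l) = l by omega, show m + 1 - (m + 1 - l + 1) = l - 1 by omega])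
  rwa [show m + 1 - (m + 1 - k) = k by omega, show m + 1 - (m + 1 - k + 1) = k - 1 by omega] at h

theorem apply_eq_self (hπ : IsMovePerm_s14 G π) (hw : IsBarePath G m w) (h₀ : π (w 0) ≠ w 1)
    (h₁ : π (w (m + 1)) ≠ w m) (hk₁ : 1 ≤ k) (hk₂ : k ≤ m) : π (w k) = w k := by
  rcases hw.apply_eq_or hπ hk₁ hk₂ with h | h | h
  · exact h
  · exact absurd (hw.apply_pred hπ (k := m + 1) (by omega) le_rfl hk₁ (by omega) h)
      (by simpa using h₁)
  · exact absurd (hw.apply_succ hπ (k := 0) (by omega) hk₂ h) h₀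

end IsBarePath

structure IsTheta (G : SimpleGraph V) (x y : V) (m : Fin 3 → ℕ) (w : Fin 3 → ℕ → V) : Prop where
  isBarePath : ∀ i, IsBarePath G (m i) (w i)
  apply_zero : ∀ i, w i 0 = x
  apply_succ_len : ∀ i, w i (m i + 1) = y
  cover : ∀ v, v = x ∨ v = y ∨ ∃ i k, 1 ≤ k ∧ k ≤ m i ∧ v = w i k
  adj_left_iff : ∀ u, G.Adj x u ↔ ∃ i, u = w i 1
  adj_right_iff : ∀ u, G.Adj y u ↔ ∃ i, u = w i (m i)
  injective_first : Function.Injective fun i => w i 1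
  injective_last : Function.Injective fun i => w i (m i)

namespace IsTheta

variable {x y : V} {m : Fin 3 → ℕ} {w : Fin 3 → ℕ → V}

theorem eq_one_of_apply_left (hθ : IsTheta G x y m w) (hπ : IsMovePerm_s14 G π) (hx : π x = x) :
    π = 1 := by
  have hy : π y = y := by
    refine (hπ.eq_or_adj y).resolve_right fun hadj => ?_
    obtain ⟨i, hi⟩ := (hθ.adj_right_iff _).mp hadj
    have hw := hθ.isBarePath i
    have h := hw.apply_pred hπ (k := 1) le_rfl (by omega) (by omega) le_rfl
      (by rw [hθ.apply_succ_len, Nat.add_sub_cancel, hi])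
    rw [Nat.sub_self, hθ.apply_zero, ← hx] at h
    exact hw.apply_ne (k := 1) (l := 0) (by omega) (by omega) one_ne_zero
      (by rw [π.injective h, hθ.apply_zero])
  ext v
  rcases hθ.cover v with rfl | rfl | ⟨i, k, hk₁, hk₂, rfl⟩
  · simpa using hx
  · simpa using hy
  · have hw := hθ.isBarePath i
    refine hw.apply_eq_self hπ ?_ ?_ hk₁ hk₂
    · rw [hθ.apply_zero, hx, ← hθ.apply_zero i]
      exact hw.apply_ne (by omega) (by omega) zero_ne_one
    · rw [hθ.apply_succ_len, hy, ← hθ.apply_succ_len i]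
      exact hw.apply_ne le_rfl (by omega) (by omega)

theorem exists_of_ne_one (hθ : IsTheta G x y m w) (hπ : IsMovePerm_s14 G π) (hne : π ≠ 1) :
    ∃ i j, i ≠ j ∧ π x = w i 1 ∧ π y = w j (m j) := by
  have hx : π x ≠ x := fun h => hne (hθ.eq_one_of_apply_left hπ h)
  obtain ⟨i, hi⟩ := (hθ.adj_left_iff _).mp ((hπ.eq_or_adj x).resolve_left hx)
  have hw := hθ.isBarePath i
  have hlast : π (w i (m i)) = y := by
    rw [← hθ.apply_succ_len i]
    exact hw.apply_succ hπ (l := 0) le_rfl (by omega) (by rwa [hθ.apply_zero])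
  have hy : π y ≠ y := fun h => hw.apply_ne (k := m i) (l := m i + 1) (by omega) le_rfl
    (by omega) (by rw [π.injective (hlast.trans h.symm), hθ.apply_succ_len])
  obtain ⟨j, hj⟩ := (hθ.adj_right_iff _).mp ((hπ.eq_or_adj y).resolve_left hy)
  refine ⟨i, j, ?_, hi, hj⟩
  rintro rfl
  exact hy (hπ.eq_of_apply_apply y (by rw [hj, hlast]))

theorem apply_interior (hθ : IsTheta G x y m w) (hπ : IsMovePerm_s14 G π) {i j : Fin 3} (hij : i ≠ j)
    (hx : π x = w i 1) (hy : π y = w j (m j)) (p : Fin 3) {k : ℕ} (hk₁ : 1 ≤ k) (hk₂ : k ≤ m p) :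
    π (w p k) = if p = i then w p (k + 1) else if p = j then w p (k - 1) else w p k := by
  have hw := hθ.isBarePath p
  split_ifs with hpi hpj
  · subst hpi
    exact hw.apply_succ hπ (l := 0) hk₂ (by omega) (by rwa [hθ.apply_zero])
  · subst hpj
    exact hw.apply_pred hπ (l := m p + 1) hk₁ (by omega) (by omega) le_rfl
      (by rwa [hθ.apply_succ_len, Nat.add_sub_cancel])
  · refine hw.apply_eq_self hπ ?_ ?_ hk₁ hk₂
    · rw [hθ.apply_zero, hx]
      exact hθ.injective_first.ne (Ne.symm hpi)
    · rw [hθ.apply_succ_len, hy]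
      exact hθ.injective_last.ne (Ne.symm hpj)

theorem eq_of_apply_left_right (hθ : IsTheta G x y m w) (hπ : IsMovePerm_s14 G π)
    (hπ' : IsMovePerm_s14 G π') (hne : π ≠ 1) (hx : π x = π' x) (hy : π y = π' y) : π = π' := by
  obtain ⟨i, j, hij, hxi, hyj⟩ := hθ.exists_of_ne_one hπ hne
  ext v
  rcases hθ.cover v with rfl | rfl | ⟨p, k, hk₁, hk₂, rfl⟩
  · exact hx
  · exact hy
  · rw [hθ.apply_interior hπ hij hxi hyj p hk₁ hk₂,
      hθ.apply_interior hπ' hij (hx ▸ hxi) (hy ▸ hyj) p hk₁ hk₂]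

theorem ncard_ne_one_le (hθ : IsTheta G x y m w) :
    {π : Equiv.Perm V | IsMovePerm_s14 G π ∧ π ≠ 1}.ncard ≤ 6 := by
  let ends : Fin 3 × Fin 3 → V × V := fun p => (w p.1 1, w p.2 (m p.2))
  calc {π : Equiv.Perm V | IsMovePerm_s14 G π ∧ π ≠ 1}.ncard
      ≤ (ends '' {p | p.1 ≠ p.2}).ncard := by
        refine Set.ncard_le_ncard_of_injOn (fun π => (π x, π y)) ?_ ?_ (Set.toFinite _)
        · rintro π ⟨hπ, hne⟩
          obtain ⟨i, j, hij, hx, hy⟩ := hθ.exists_of_ne_one hπ hne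
          exact ⟨(i, j), hij, by simp [ends, hx, hy]⟩
        · rintro π ⟨hπ, hne⟩ π' ⟨hπ', -⟩ h
          exact hθ.eq_of_apply_left_right hπ hπ' hne (congrArg Prod.fst h) (congrArg Prod.snd h)
    _ ≤ {p : Fin 3 × Fin 3 | p.1 ≠ p.2}.ncard := Set.ncard_image_le
    _ = 6 := by rw [Set.ncard_eq_toFinset_card']; rfl

theorem ncard_move_ne_le [Finite V] (hθ : IsTheta G x y m w) (X : Equiv.Perm V) :
    {Y | Y ≠ X ∧ IsMove G X Y}.ncard ≤ 6 :=
  (Set.ncard_le_ncard_of_injOn (fun Y => Y * X⁻¹)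
    (fun _ hY => show _ ∧ _ from ⟨hY.2.isMovePerm, mul_inv_eq_one.not.mpr hY.1⟩)
    (mul_left_injective X⁻¹).injOn (Set.toFinite _)).trans hθ.ncard_ne_one_le

theorem ncard_move_le [Finite V] (hθ : IsTheta G x y m w) (X : Equiv.Perm V) :
    {Y | IsMove G X Y}.ncard ≤ 7 :=
  calc {Y | IsMove G X Y}.ncard ≤ (insert X {Y | Y ≠ X ∧ IsMove G X Y}).ncard :=
        Set.ncard_le_ncard (fun Y hY => (em (Y = X)).imp id (⟨·, hY⟩)) (Set.toFinite _)
    _ ≤ {Y | Y ≠ X ∧ IsMove G X Y}.ncard + 1 := Set.ncard_insert_le _ _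
    _ ≤ 7 := by grw [hθ.ncard_move_ne_le X]

end IsTheta

end

def junctionPath {n m : ℕ} (e : Fin m → F8V n) (k : ℕ) : F8V n :=
  if _ : k = 0 then .inl 0 else if _ : k ≤ m then e ⟨k - 1, by omega⟩ else .inl 1

def figureEightLen (n : ℕ) : Fin 3 → ℕ := ![n, 3 * n + 2, 3 * n + 2]

def figureEightPath (n : ℕ) : Fin 3 → ℕ → F8V n :=
  ![junctionPath (Sum.inr ∘ Sum.inl), junctionPath (Sum.inr ∘ Sum.inr ∘ Sum.inl),
    junctionPath (Sum.inr ∘ Sum.inr ∘ Sum.inr)]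

theorem figureEight_adj {n : ℕ} {u v : F8V n} :
    (figureEight n).Adj u v ↔ u ≠ v ∧ (F8Rel n u v ∨ F8Rel n v u) :=
  SimpleGraph.fromRel_adj _ _ _

theorem isBarePath_figureEightPath (n : ℕ) (i : Fin 3) :
    IsBarePath (figureEight n) (figureEightLen n i) (figureEightPath n i) := by
  constructor
  · intro k hk l hl h
    simp only [Set.mem_Iic] at hk hl
    fin_cases i <;>
    · simp [figureEightPath, figureEightLen, junctionPath] at h hk hl ⊢
      split_ifs at h <;> simp_all [Fin.ext_iff] <;> omega
  · intro k hk₁ hk₂ u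
    rw [figureEight_adj]
    fin_cases i <;>
    · simp [figureEightPath, figureEightLen, junctionPath] at hk₂ ⊢
      rcases u with a | j | j | j
      · fin_cases a <;> split_ifs <;> simp_all [F8Rel] <;> omega
      all_goals split_ifs <;> simp_all [F8Rel, Fin.ext_iff, -Fin.val_eq_zero_iff] <;> omega

theorem isTheta_figureEight (n : ℕ) :
    IsTheta (figureEight n) (.inl 0) (.inl 1) (figureEightLen n) (figureEightPath n) where
  isBarePath := isBarePath_figureEightPath n
  apply_zero i := by fin_cases i <;> simp [figureEightPath, junctionPath]
  apply_succ_len i := by fin_cases i <;> simp [figureEightPath, figureEightLen, junctionPath]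
  cover v := by
    rcases v with a | j | j | j
    · fin_cases a <;> simp
    · refine Or.inr (Or.inr ⟨0, j.val + 1, by omega, ?_, ?_⟩)
      all_goals simp [figureEightPath, figureEightLen, junctionPath]
    · refine Or.inr (Or.inr ⟨1, j.val + 1, by omega, ?_, ?_⟩)
      all_goals simp [figureEightPath, figureEightLen, junctionPath]; omega
    · refine Or.inr (Or.inr ⟨2, j.val + 1, by omega, ?_, ?_⟩)
      all_goals simp [figureEightPath, figureEightLen, junctionPath]; omega
  adj_left_iff u := by
    rw [figureEight_adj]
    simp [Fin.exists_fin_succ, figureEightPath, junctionPath]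
    rcases u with a | j | j | j
    · fin_cases a <;> split_ifs <;> simp_all [F8Rel]
      omega
    all_goals split_ifs <;> simp_all [F8Rel, Fin.ext_iff, -Fin.val_eq_zero_iff] <;> omega
  adj_right_iff u := by
    rw [figureEight_adj]
    simp [Fin.exists_fin_succ, figureEightPath, figureEightLen, junctionPath]
    rcases u with a | j | j | j
    · fin_cases a <;> split_ifs <;> simp_all [F8Rel]
    all_goals split_ifs <;> simp_all [F8Rel, Fin.ext_iff, -Fin.val_eq_zero_iff] <;> omega
  injective_first i j h := by
    fin_cases i <;> fin_cases j <;> simp [figureEightPath, junctionPath] at h ⊢ <;>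
      split_ifs at h <;> simp at h
  injective_last i j h := by
    fin_cases i <;> fin_cases j <;> simp [figureEightPath, figureEightLen, junctionPath] at h ⊢ <;>
      split_ifs at h <;> simp at h

/-- From any configuration on a fully occupied figure-8 graph, at most `6`
configurations `Y ≠ X` are reachable by a single synchronous move; hence at most
`7` configurations (including `X` itself) are reachable in one move. -/
theorem figure8_branching (n : ℕ) (X : Equiv.Perm (F8V n)) :
    Nat.card {Y : Equiv.Perm (F8V n) | Y ≠ X ∧ IsMove (figureEight n) X Y} ≤ 6 ∧
    Nat.card {Y : Equiv.Perm (F8V n) | IsMove (figureEight n) X Y} ≤ 7 := by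
  simp only [Nat.card_coe_set_eq]
  exact ⟨(isTheta_figureEight n).ncard_move_ne_le X, (isTheta_figureEight n).ncard_move_le X⟩
end
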